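/- Two distinct integral points u = z(r_u, c_u) and v = z(r_v, c_v) of SATP_LP(m,n) are adjacent as vertices of SATP(m,n) if and only if one of the following holds: (a) r_u ≠ r_v and c_u ≠ c_v; (b) c_u = c_v and r_u, r_v differ in exactly one coordinate; (c) r_u = r_v and c_u, c_v differ in exactly one coordinate. -/

import Mathlib

open Finset

/-- A point of ℝ^{6mn}: coordinates x^{k,l}_{i,j} with `i : Fin m`, `j : Fin n`,
`k : Fin 3` (the paper's k-1, since the paper indexes k ∈ {1,2,3}) and
`l : Fin 2` (the paper's l-1). -/
abbrev Pt (m n : ℕ) := Fin m → Fin n → Fin 3 → Fin 2 → ℝ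

/-- The relaxation polytope SATP_LP(m,n), given by the constraints (i)-(iv). -/
def SATPLP (m n : ℕ) : Set (Pt m n) :=
  {x | (∀ i j, ∑ k, ∑ l, x i j k l = 1) ∧
       (∀ i j t, ∑ k, x i j k 0 = ∑ k, x i t k 0) ∧
       (∀ k j i s, x i j k 0 + x i j k 1 = x s j k 0 + x s j k 1) ∧
       (∀ i j k l, 0 ≤ x i j k l)}

/-- The integral points of SATP_LP(m,n): the points all of whose coordinates are 0 or 1. -/
def IntPts (m n : ℕ) : Set (Pt m n) :=
  {x | x ∈ SATPLP m n ∧ ∀ i j k l, x i j k l = 0 ∨ x i j k l = 1}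

/-- SATP(m,n): the convex hull of the integral points of SATP_LP(m,n). -/
def SATP (m n : ℕ) : Set (Pt m n) := convexHull ℝ (IntPts m n)

/-- The 0-1 point z(r,c): coordinate (i,j,k,l) equals 1 iff k = c_j and l = r_i
(in the paper's 1-based notation, k = c_j + 1 and l = r_i + 1). -/
def zpt {m n : ℕ} (r : Fin m → Fin 2) (c : Fin n → Fin 3) : Pt m n :=
  fun i j k l => if k = c j ∧ l = r i then 1 else 0

/-- Two distinct integral points u, v of SATP_LP(m,n) are adjacent (as vertices of
SATP(m,n)) iff the segment [u,v] is disjoint from the convex hull of the remaining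
integral points. -/
def IsAdjacent {m n : ℕ} (u v : Pt m n) : Prop :=
  u ∈ IntPts m n ∧ v ∈ IntPts m n ∧ u ≠ v ∧
  segment ℝ u v ∩ convexHull ℝ (IntPts m n \ {u, v}) = ∅

/-!
An integral point `z(r, c)` has exactly one coordinate equal to `1` in each cell `(i, j)`.
Under (a), (b) or (c), the only integral points whose support lies in `supp u ∪ supp v` are
`u` and `v`; hence the linear functional measuring the mass of `x` outside `supp u ∪ supp v`
vanishes on `[u, v]` and is positive on every other integral point. Otherwise `u` and `v` have
equal rows (or equal columns) and differ in two columns `j₁ ≠ j₂` (or rows); exchanging their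
values in column `j₁` gives two other integral points with the same midpoint as `u` and `v`.
-/

lemma Function.eq_or_eq_of_forall_eq_or_eq {ι β : Type*} {x a b : ι → β}
    (hx : ∀ i, x i = a i ∨ x i = b i) (hab : ∀ i j, a i ≠ b i → a j ≠ b j → i = j) :
    x = a ∨ x = b := by
  by_contra! h
  obtain ⟨i, hi⟩ := Function.ne_iff.mp h.1
  obtain ⟨j, hj⟩ := Function.ne_iff.mp h.2
  have hxi : x i = b i := (hx i).resolve_left hi
  have hxj : x j = a j := (hx j).resolve_right hj
  obtain rfl := hab i j (fun e => hi (hxi.trans e.symm)) (fun e => hj (hxj.trans e))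
  exact hi hxj

lemma Function.update_ne_left_and_ne_right {ι β : Type*} [DecidableEq ι] {x y : ι → β}
    {j₁ j₂ : ι} (hj : j₁ ≠ j₂) (h₁ : x j₁ ≠ y j₁) (h₂ : x j₂ ≠ y j₂) :
    Function.update x j₁ (y j₁) ≠ x ∧ Function.update x j₁ (y j₁) ≠ y :=
  ⟨fun h => h₁ (by simpa using (congrFun h j₁).symm),
    fun h => h₂ (by simpa [Function.update_of_ne hj.symm] using congrFun h j₂)⟩

lemma exists_eq_ite_of_sum_eq_one {ι : Type*} [Fintype ι] [DecidableEq ι] {f : ι → ℝ}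
    (h01 : ∀ i, f i = 0 ∨ f i = 1) (hsum : ∑ i, f i = 1) :
    ∃ a, ∀ i, f i = if i = a then 1 else 0 := by
  have hcard : (univ.filter fun i => f i = 1).card = 1 := by
    have : ∑ i, f i = ∑ i, if f i = 1 then (1 : ℝ) else 0 :=
      sum_congr rfl fun i _ => by rcases h01 i with h | h <;> simp [h]
    rw [this, sum_boole] at hsum
    exact_mod_cast hsum
  obtain ⟨a, ha⟩ := card_eq_one.mp hcard
  refine ⟨a, fun i => ?_⟩
  have hi : f i = 1 ↔ i = a := by simpa using Finset.ext_iff.mp ha i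
  rcases h01 i with h | h <;> simp_all

lemma iff_of_ite_eq_ite {P Q : Prop} [Decidable P] [Decidable Q]
    (h : (if P then (1 : ℝ) else 0) = if Q then 1 else 0) : P ↔ Q := by
  split_ifs at h <;> simp_all

lemma segment_inter_convexHull_eq_empty_of_linearMap {E : Type*} [AddCommGroup E] [Module ℝ E]
    (f : E →ₗ[ℝ] ℝ) {u v : E} {s : Set E} (hu : f u ≤ 0) (hv : f v ≤ 0)
    (hs : ∀ w ∈ s, 0 < f w) : segment ℝ u v ∩ convexHull ℝ s = ∅ := by
  have hseg : segment ℝ u v ⊆ {w | f w ≤ 0} :=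
    (convex_halfSpace_le f.isLinear 0).segment_subset hu hv
  have hhull : convexHull ℝ s ⊆ {w | 0 < f w} :=
    convexHull_min hs (convex_halfSpace_gt f.isLinear 0)
  refine Set.eq_empty_iff_forall_notMem.mpr fun w ⟨hw₁, hw₂⟩ => ?_
  exact (show 0 < f w from hhull hw₂).not_ge (hseg hw₁)

section

variable {m n : ℕ}

lemma neZero_of_zpt_ne {ru rv : Fin m → Fin 2} {cu cv : Fin n → Fin 3}
    (h : (zpt ru cu : Pt m n) ≠ zpt rv cv) : NeZero m ∧ NeZero n :=
  ⟨⟨by rintro rfl; exact h (Subsingleton.elim _ _)⟩,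
    ⟨by rintro rfl; exact h (Subsingleton.elim _ _)⟩⟩

lemma zpt_mem_intPts (r : Fin m → Fin 2) (c : Fin n → Fin 3) : zpt r c ∈ IntPts m n := by
  refine ⟨⟨fun i j => ?_, fun i j t => ?_, fun k j i s => ?_, fun i j k l => ?_⟩,
    fun i j k l => ?_⟩
  · simp [zpt, ite_and]
  · simp [zpt, ite_and]
  · have hcol : ∀ i, zpt r c i j k 0 + zpt r c i j k 1 = if k = c j then 1 else 0 := fun i => by
      rw [← Fin.sum_univ_two (f := zpt r c i j k)]
      simp [zpt, ite_and]
    exact (hcol i).trans (hcol s).symm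
  · unfold zpt; positivity
  · unfold zpt; split_ifs <;> simp

lemma zpt_eq_zpt_iff [NeZero m] [NeZero n] {r r' : Fin m → Fin 2} {c c' : Fin n → Fin 3} :
    (zpt r c : Pt m n) = zpt r' c' ↔ r = r' ∧ c = c' := by
  refine ⟨fun h => ?_, by rintro ⟨rfl, rfl⟩; rfl⟩
  have hcell : ∀ i j, r i = r' i ∧ c j = c' j := fun i j => by
    simpa [zpt, and_comm, eq_comm] using
      congrFun (congrFun (congrFun (congrFun h i) j) (c j)) (r i)
  exact ⟨funext fun i => (hcell i 0).1, funext fun j => (hcell 0 j).2⟩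

lemma exists_eq_zpt_of_mem_intPts [NeZero m] [NeZero n] {x : Pt m n} (hx : x ∈ IntPts m n) :
    ∃ r c, x = zpt r c := by
  obtain ⟨⟨hsum, hrow, hcol, -⟩, h01⟩ := hx
  have hcell : ∀ i j, ∃ p : Fin 3 × Fin 2,
      ∀ k l, x i j k l = if k = p.1 ∧ l = p.2 then 1 else 0 := fun i j => by
    obtain ⟨p, hp⟩ := exists_eq_ite_of_sum_eq_one (f := fun q : Fin 3 × Fin 2 => x i j q.1 q.2)
      (fun q => h01 i j q.1 q.2) (by rw [Fintype.sum_prod_type]; exact hsum i j)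
    exact ⟨p, fun k l => by simpa [Prod.ext_iff] using hp (k, l)⟩
  choose p hp using hcell
  have hl_const : ∀ i j t, (p i j).2 = (p i t).2 := fun i j t => by
    have hrow_eq : ∀ j, ∑ k, x i j k 0 = if 0 = (p i j).2 then 1 else 0 := fun j => by
      simp [hp, ite_and]
    have := iff_of_ite_eq_ite ((hrow_eq j).symm.trans ((hrow i j t).trans (hrow_eq t)))
    omega
  have hk_const : ∀ i s j, (p i j).1 = (p s j).1 := fun i s j => by
    have hcol_eq : ∀ i, x i j (p s j).1 0 + x i j (p s j).1 1 =
        if (p s j).1 = (p i j).1 then 1 else 0 := fun i => by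
      rw [← Fin.sum_univ_two (f := x i j _)]
      simp [hp, ite_and]
    have := iff_of_ite_eq_ite ((hcol_eq i).symm.trans ((hcol _ j i s).trans (hcol_eq s)))
    exact (this.mpr rfl).symm
  refine ⟨fun i => (p i 0).2, fun j => (p 0 j).1, funext fun i => funext fun j => ?_⟩
  ext k l
  rw [hp, zpt, hk_const i 0 j, hl_const i j 0]

def weightedSum (g : Pt m n) : Pt m n →ₗ[ℝ] ℝ where
  toFun x := ∑ i, ∑ j, ∑ k, ∑ l, g i j k l * x i j k l
  map_add' x y := by simp only [Pi.add_apply, mul_add, sum_add_distrib]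
  map_smul' a x := by
    simp only [Pi.smul_apply, smul_eq_mul, mul_sum, RingHom.id_apply, mul_left_comm]

lemma weightedSum_zpt (g : Pt m n) (r : Fin m → Fin 2) (c : Fin n → Fin 3) :
    weightedSum g (zpt r c) = ∑ i, ∑ j, g i j (c j) (r i) := by
  simp only [weightedSum, LinearMap.coe_mk, AddHom.coe_mk]
  refine sum_congr rfl fun i _ => sum_congr rfl fun j _ => ?_
  rw [sum_eq_single (c j) (fun k _ hk => by simp [zpt, hk]) (by simp),
    sum_eq_single (r i) (fun l _ hl => by simp [zpt, hl]) (by simp)]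
  simp [zpt]

/-- The support of `z(r, c)` is contained in the union of the supports of `z(ru, cu)` and
`z(rv, cv)`. -/
def CoveredBy (r : Fin m → Fin 2) (c : Fin n → Fin 3) (ru rv : Fin m → Fin 2)
    (cu cv : Fin n → Fin 3) : Prop :=
  ∀ i j, (r i = ru i ∧ c j = cu j) ∨ (r i = rv i ∧ c j = cv j)

def uncovered (ru rv : Fin m → Fin 2) (cu cv : Fin n → Fin 3) : Pt m n :=
  fun i j k l => if (l = ru i ∧ k = cu j) ∨ (l = rv i ∧ k = cv j) then 0 else 1

lemma uncovered_nonneg (ru rv : Fin m → Fin 2) (cu cv : Fin n → Fin 3) (i : Fin m) (j : Fin n)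
    (k : Fin 3) (l : Fin 2) : 0 ≤ uncovered ru rv cu cv i j k l := by
  unfold uncovered; positivity

lemma weightedSum_uncovered_zpt_nonneg (ru rv r : Fin m → Fin 2) (cu cv c : Fin n → Fin 3) :
    0 ≤ weightedSum (uncovered ru rv cu cv) (zpt r c) := by
  rw [weightedSum_zpt]
  exact sum_nonneg fun i _ => sum_nonneg fun j _ => uncovered_nonneg ..

lemma weightedSum_uncovered_zpt_eq_zero_iff (ru rv r : Fin m → Fin 2)
    (cu cv c : Fin n → Fin 3) :
    weightedSum (uncovered ru rv cu cv) (zpt r c) = 0 ↔ CoveredBy r c ru rv cu cv := by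
  rw [weightedSum_zpt, sum_eq_zero_iff_of_nonneg fun i _ =>
    sum_nonneg fun j _ => uncovered_nonneg ..]
  simp only [mem_univ, true_implies, CoveredBy]
  refine forall_congr' fun i => ?_
  rw [sum_eq_zero_iff_of_nonneg fun j _ => uncovered_nonneg ..]
  simp only [uncovered, ite_eq_left_iff, one_ne_zero, imp_false, not_not, mem_univ, true_implies]

lemma isAdjacent_zpt_of_coveredBy [NeZero m] [NeZero n] {ru rv : Fin m → Fin 2}
    {cu cv : Fin n → Fin 3} (hne : (zpt ru cu : Pt m n) ≠ zpt rv cv)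
    (h : ∀ r c, CoveredBy r c ru rv cu cv → (r = ru ∧ c = cu) ∨ (r = rv ∧ c = cv)) :
    IsAdjacent (zpt ru cu) (zpt rv cv) := by
  refine ⟨zpt_mem_intPts _ _, zpt_mem_intPts _ _, hne, ?_⟩
  refine segment_inter_convexHull_eq_empty_of_linearMap (weightedSum (uncovered ru rv cu cv))
    ((weightedSum_uncovered_zpt_eq_zero_iff ..).mpr fun i j => .inl ⟨rfl, rfl⟩).le
    ((weightedSum_uncovered_zpt_eq_zero_iff ..).mpr fun i j => .inr ⟨rfl, rfl⟩).le ?_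
  rintro w ⟨hw, hwuv⟩
  obtain ⟨r, c, rfl⟩ := exists_eq_zpt_of_mem_intPts hw
  refine (weightedSum_uncovered_zpt_nonneg ..).lt_of_ne' fun h0 => hwuv ?_
  rcases h r c ((weightedSum_uncovered_zpt_eq_zero_iff ..).mp h0) with
    ⟨rfl, rfl⟩ | ⟨rfl, rfl⟩
  · exact .inl rfl
  · exact .inr rfl

namespace CoveredBy

variable {ru rv r : Fin m → Fin 2} {cu cv c : Fin n → Fin 3}

lemma row_eq_or_eq [NeZero n] (h : CoveredBy r c ru rv cu cv) (i : Fin m) :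
    r i = ru i ∨ r i = rv i :=
  (h i 0).imp And.left And.left

lemma col_eq_or_eq [NeZero m] (h : CoveredBy r c ru rv cu cv) (j : Fin n) :
    c j = cu j ∨ c j = cv j :=
  (h 0 j).imp And.right And.right

lemma eq_or_eq_of_ne_of_ne (h : CoveredBy r c ru rv cu cv) (hr : ru ≠ rv) (hc : cu ≠ cv) :
    (r = ru ∧ c = cu) ∨ (r = rv ∧ c = cv) := by
  obtain ⟨i₀, hi₀⟩ := Function.ne_iff.mp hr
  obtain ⟨j₀, hj₀⟩ := Function.ne_iff.mp hc
  by_cases hru : r = ru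
  · subst hru
    exact .inl ⟨rfl, funext fun j => ((h i₀ j).resolve_right fun h' => hi₀ h'.1).2⟩
  · obtain ⟨i₁, hi₁⟩ := Function.ne_iff.mp hru
    obtain rfl : c = cv := funext fun j => ((h i₁ j).resolve_left fun h' => hi₁ h'.1).2
    exact .inr ⟨funext fun i => ((h i j₀).resolve_left fun h' => hj₀ h'.2.symm).1, rfl⟩

lemma eq_or_eq [NeZero m] [NeZero n] (h : CoveredBy r c ru rv cu cv)
    (hcond : (ru ≠ rv ∧ cu ≠ cv) ∨ (cu = cv ∧ ∃! i, ru i ≠ rv i) ∨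
      (ru = rv ∧ ∃! j, cu j ≠ cv j)) :
    (r = ru ∧ c = cu) ∨ (r = rv ∧ c = cv) := by
  rcases hcond with ⟨hr, hc⟩ | ⟨rfl, hr⟩ | ⟨rfl, hc⟩
  · exact h.eq_or_eq_of_ne_of_ne hr hc
  · obtain rfl : c = cu := funext fun j => (h.col_eq_or_eq j).elim id id
    exact (Function.eq_or_eq_of_forall_eq_or_eq h.row_eq_or_eq fun _ _ => hr.unique).imp
      (⟨·, rfl⟩) (⟨·, rfl⟩)
  · obtain rfl : r = ru := funext fun i => (h.row_eq_or_eq i).elim id id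
    exact (Function.eq_or_eq_of_forall_eq_or_eq h.col_eq_or_eq fun _ _ => hc.unique).imp
      (⟨rfl, ·⟩) (⟨rfl, ·⟩)

end CoveredBy

lemma not_isAdjacent_of_add_eq {u v w₁ w₂ : Pt m n} (h₁ : w₁ ∈ IntPts m n \ {u, v})
    (h₂ : w₂ ∈ IntPts m n \ {u, v}) (h : u + v = w₁ + w₂) : ¬ IsAdjacent u v := by
  rintro ⟨-, -, -, hempty⟩
  have hmid : midpoint ℝ u v = midpoint ℝ w₁ w₂ := by
    simp only [midpoint_eq_smul_add, h]
  refine (Set.eq_empty_iff_forall_notMem.mp hempty) (midpoint ℝ u v)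
    ⟨midpoint_mem_segment u v, ?_⟩
  exact hmid ▸ segment_subset_convexHull h₁ h₂ (midpoint_mem_segment w₁ w₂)

lemma zpt_add_zpt_eq_swap_col (r : Fin m → Fin 2) (cu cv : Fin n → Fin 3) (j₀ : Fin n) :
    zpt r cu + zpt r cv =
      zpt r (Function.update cu j₀ (cv j₀)) + zpt r (Function.update cv j₀ (cu j₀)) := by
  ext i j k l
  rcases eq_or_ne j j₀ with rfl | hj
  · simp [zpt, add_comm]
  · simp [zpt, Function.update_of_ne hj]

lemma zpt_add_zpt_eq_swap_row (ru rv : Fin m → Fin 2) (c : Fin n → Fin 3) (i₀ : Fin m) :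
    zpt ru c + zpt rv c =
      zpt (Function.update ru i₀ (rv i₀)) c + zpt (Function.update rv i₀ (ru i₀)) c := by
  ext i j k l
  rcases eq_or_ne i i₀ with rfl | hi
  · simp [zpt, add_comm]
  · simp [zpt, Function.update_of_ne hi]

lemma IsAdjacent.existsUnique_col_ne [NeZero m] [NeZero n] {r : Fin m → Fin 2}
    {cu cv : Fin n → Fin 3} (h : IsAdjacent (zpt r cu) (zpt r cv)) : ∃! j, cu j ≠ cv j := by
  obtain ⟨j₁, h₁⟩ := Function.ne_iff.mp fun hc : cu = cv => h.2.2.1 (hc ▸ rfl)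
  refine ⟨j₁, h₁, fun j₂ h₂ => by_contra fun hj => ?_⟩
  obtain ⟨hu₁, hv₁⟩ := Function.update_ne_left_and_ne_right (Ne.symm hj) h₁ h₂
  obtain ⟨hv₂, hu₂⟩ :=
    Function.update_ne_left_and_ne_right (Ne.symm hj) (Ne.symm h₁) (Ne.symm h₂)
  refine not_isAdjacent_of_add_eq ?_ ?_ (zpt_add_zpt_eq_swap_col r cu cv j₁) h <;>
    exact ⟨zpt_mem_intPts _ _, by simp [zpt_eq_zpt_iff, hu₁, hv₁, hu₂, hv₂]⟩

lemma IsAdjacent.existsUnique_row_ne [NeZero m] [NeZero n] {ru rv : Fin m → Fin 2}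
    {c : Fin n → Fin 3} (h : IsAdjacent (zpt ru c) (zpt rv c)) : ∃! i, ru i ≠ rv i := by
  obtain ⟨i₁, h₁⟩ := Function.ne_iff.mp fun hr : ru = rv => h.2.2.1 (hr ▸ rfl)
  refine ⟨i₁, h₁, fun i₂ h₂ => by_contra fun hi => ?_⟩
  obtain ⟨hu₁, hv₁⟩ := Function.update_ne_left_and_ne_right (Ne.symm hi) h₁ h₂
  obtain ⟨hv₂, hu₂⟩ :=
    Function.update_ne_left_and_ne_right (Ne.symm hi) (Ne.symm h₁) (Ne.symm h₂)
  refine not_isAdjacent_of_add_eq ?_ ?_ (zpt_add_zpt_eq_swap_row ru rv c i₁) h <;>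
    exact ⟨zpt_mem_intPts _ _, by simp [zpt_eq_zpt_iff, hu₁, hv₁, hu₂, hv₂]⟩

end

/-- two distinct integral points z(r_u,c_u) and z(r_v,c_v) are adjacent as
vertices of SATP(m,n) iff (a) r_u ≠ r_v and c_u ≠ c_v, or (b) c_u = c_v and r_u, r_v
differ in exactly one coordinate, or (c) r_u = r_v and c_u, c_v differ in exactly one
coordinate. -/
theorem stmt9 (m n : ℕ) (ru rv : Fin m → Fin 2) (cu cv : Fin n → Fin 3)
    (hne : (zpt ru cu : Pt m n) ≠ zpt rv cv) :
    IsAdjacent (zpt ru cu) (zpt rv cv) ↔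
      ((ru ≠ rv ∧ cu ≠ cv) ∨
       (cu = cv ∧ ∃! i, ru i ≠ rv i) ∨
       (ru = rv ∧ ∃! j, cu j ≠ cv j)) := by
  obtain ⟨_, _⟩ := neZero_of_zpt_ne hne
  refine ⟨fun hadj => ?_, fun h =>
    isAdjacent_zpt_of_coveredBy hne fun r c hcov => hcov.eq_or_eq h⟩
  rcases eq_or_ne ru rv with rfl | hr
  · exact .inr (.inr ⟨rfl, hadj.existsUnique_col_ne⟩)
  rcases eq_or_ne cu cv with rfl | hc
  · exact .inr (.inl ⟨rfl, hadj.existsUnique_row_ne⟩)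
  · exact .inl ⟨hr, hc⟩
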